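/- arXiv:2504.10092 — 2 statements merged into one kernel-verified Lean document; each statement's English description precedes it below -/
import Mathlib

section
/- For z₁, z₂, y in a real inner product space and any τ > 0, |exp(-½‖z₁-y‖²) - exp(-½‖z₂-y‖²)| ≤ ½(‖z₁‖ + ‖z₂‖ + 2‖y‖) · exp(((τ-1)/2)‖y‖² + ‖z₁‖²/(2τ) + ‖z₂‖²/(2τ)) · ‖z₁ - z₂‖. -/
lemma abs_exp_sub_exp_le_aux (u v C : ℝ) (hu : u ≤ C) (hv : v ≤ C) :
    |Real.exp u - Real.exp v| ≤ Real.exp C * |u - v| := by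
  have key : ∀ a b : ℝ, a ≤ C → b ≤ C → Real.exp a - Real.exp b ≤ Real.exp C * |a - b| := by
    intro a b ha hb
    have h1 : Real.exp a * (1 + (b - a)) ≤ Real.exp b := by
      have := Real.add_one_le_exp (b - a)
      calc Real.exp a * (1 + (b - a)) ≤ Real.exp a * Real.exp (b - a) := by
            apply mul_le_mul_of_nonneg_left _ (Real.exp_nonneg a)
            linarith
        _ = Real.exp b := by rw [← Real.exp_add]; ring_nf
    have h2 : Real.exp a - Real.exp b ≤ Real.exp a * (a - b) := by nlinarith [Real.exp_nonneg a]
    rcases le_or_gt a b with h | h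
    · have : Real.exp a - Real.exp b ≤ 0 := by
        have := Real.exp_le_exp.mpr h; linarith
      have : (0:ℝ) ≤ Real.exp C * |a - b| :=
        mul_nonneg (Real.exp_nonneg C) (abs_nonneg _)
      linarith
    · have hab : |a - b| = a - b := abs_of_pos (by linarith)
      rw [hab]
      calc Real.exp a - Real.exp b ≤ Real.exp a * (a - b) := h2
        _ ≤ Real.exp C * (a - b) := by
            apply mul_le_mul_of_nonneg_right (Real.exp_le_exp.mpr ha); linarith
  rcases abs_cases (Real.exp u - Real.exp v) with ⟨h, _⟩ | ⟨h, _⟩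
  · rw [h]; exact key u v hu hv
  · rw [h]
    have := key v u hv hu
    rw [abs_sub_comm] at this
    linarith

theorem exp_neg_half_sq_diff_le {E : Type*} [NormedAddCommGroup E] [InnerProductSpace ℝ E]
    (z₁ z₂ y : E) (τ : ℝ) (hτ : 0 < τ) :
    |Real.exp (-(1 / 2) * ‖z₁ - y‖ ^ 2) - Real.exp (-(1 / 2) * ‖z₂ - y‖ ^ 2)| ≤
      (1 / 2) * (‖z₁‖ + ‖z₂‖ + 2 * ‖y‖) *
        Real.exp (((τ - 1) / 2) * ‖y‖ ^ 2 + ‖z₁‖ ^ 2 / (2 * τ) + ‖z₂‖ ^ 2 / (2 * τ)) *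
        ‖z₁ - z₂‖ := by
  set C : ℝ := ((τ - 1) / 2) * ‖y‖ ^ 2 + ‖z₁‖ ^ 2 / (2 * τ) + ‖z₂‖ ^ 2 / (2 * τ) with hC
  have hexp : ∀ z₁' z₂' : E, -(1/2 : ℝ) * ‖z₁' - y‖ ^ 2 ≤
      ((τ - 1) / 2) * ‖y‖ ^ 2 + ‖z₁'‖ ^ 2 / (2 * τ) + ‖z₂'‖ ^ 2 / (2 * τ) := by
    intro z₁' z₂'
    have hexpand : ‖z₁' - y‖ ^ 2 = ‖z₁'‖ ^ 2 - 2 * inner ℝ z₁' y + ‖y‖ ^ 2 :=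
      norm_sub_sq_real z₁' y
    have hCS : (inner ℝ z₁' y : ℝ) ≤ ‖z₁'‖ * ‖y‖ := real_inner_le_norm z₁' y
    have hAMGM : ‖z₁'‖ * ‖y‖ ≤ ‖z₁'‖ ^ 2 / (2 * τ) + (τ / 2) * ‖y‖ ^ 2 := by
      rw [div_add' _ _ _ (by positivity), le_div_iff₀ (by positivity)]
      nlinarith [sq_nonneg (‖z₁'‖ - τ * ‖y‖)]
    have hz2 : (0:ℝ) ≤ ‖z₂'‖ ^ 2 / (2 * τ) := by positivity
    nlinarith [sq_nonneg ‖z₁'‖]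
  have hu : -(1/2 : ℝ) * ‖z₁ - y‖ ^ 2 ≤ C := hexp z₁ z₂
  have hv : -(1/2 : ℝ) * ‖z₂ - y‖ ^ 2 ≤ C := by
    have := hexp z₂ z₁; rw [hC]; linarith
  have hmain := abs_exp_sub_exp_le_aux _ _ C hu hv
  have hdiff : |(-(1/2 : ℝ) * ‖z₁ - y‖ ^ 2) - (-(1/2 : ℝ) * ‖z₂ - y‖ ^ 2)| ≤
      (1/2) * (‖z₁‖ + ‖z₂‖ + 2 * ‖y‖) * ‖z₁ - z₂‖ := by
    have h1 : |‖z₁ - y‖ - ‖z₂ - y‖| ≤ ‖z₁ - z₂‖ := by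
      have := abs_norm_sub_norm_le (z₁ - y) (z₂ - y)
      have he : z₁ - y - (z₂ - y) = z₁ - z₂ := by abel
      rwa [he] at this
    have h2 : ‖z₁ - y‖ ≤ ‖z₁‖ + ‖y‖ := norm_sub_le _ _
    have h3 : ‖z₂ - y‖ ≤ ‖z₂‖ + ‖y‖ := norm_sub_le _ _
    have h4 : (0:ℝ) ≤ ‖z₁ - y‖ := norm_nonneg _
    have h5 : (0:ℝ) ≤ ‖z₂ - y‖ := norm_nonneg _
    have heq : (-(1/2 : ℝ) * ‖z₁ - y‖ ^ 2) - (-(1/2 : ℝ) * ‖z₂ - y‖ ^ 2) =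
        -(1/2) * ((‖z₁ - y‖ - ‖z₂ - y‖) * (‖z₁ - y‖ + ‖z₂ - y‖)) := by ring
    rw [heq, abs_mul, abs_mul]
    have : |(-(1/2) : ℝ)| = 1/2 := by norm_num
    rw [this]
    have habs2 : |‖z₁ - y‖ + ‖z₂ - y‖| = ‖z₁ - y‖ + ‖z₂ - y‖ := abs_of_nonneg (by linarith)
    rw [habs2]
    have hb1 : ‖z₁ - y‖ + ‖z₂ - y‖ ≤ ‖z₁‖ + ‖z₂‖ + 2 * ‖y‖ := by linarith
    have := abs_nonneg (‖z₁ - y‖ - ‖z₂ - y‖)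
    nlinarith [norm_nonneg (z₁ - z₂)]
  calc |Real.exp (-(1 / 2) * ‖z₁ - y‖ ^ 2) - Real.exp (-(1 / 2) * ‖z₂ - y‖ ^ 2)|
      ≤ Real.exp C * |(-(1/2 : ℝ) * ‖z₁ - y‖ ^ 2) - (-(1/2 : ℝ) * ‖z₂ - y‖ ^ 2)| := by
        convert hmain using 4 <;> norm_num
    _ ≤ Real.exp C * ((1/2) * (‖z₁‖ + ‖z₂‖ + 2 * ‖y‖) * ‖z₁ - z₂‖) :=
        mul_le_mul_of_nonneg_left hdiff (Real.exp_nonneg C)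
    _ = (1 / 2) * (‖z₁‖ + ‖z₂‖ + 2 * ‖y‖) * Real.exp C * ‖z₁ - z₂‖ := by ring
end

section
/- Let B ∈ ℝ^{d×n} be a real matrix and define T = I - Bᵀ(I + BBᵀ)⁻¹B on ℝⁿ. Then Bᵀ(I + BBᵀ)B acted on by T on both sides satisfies T Bᵀ(I + BBᵀ) B T = Bᵀ(I + BBᵀ)⁻¹ B. Equivalently, (I - Bᵀ(I+BBᵀ)⁻¹B) Bᵀ (I+BBᵀ) B (I - Bᵀ(I+BBᵀ)⁻¹B) = Bᵀ(I+BBᵀ)⁻¹B. -/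
/-!
By the push-through identity `C (1 + A C)⁻¹ = (1 + C A)⁻¹ C`, the factor
`1 - C (1 + A C)⁻¹ A` equals `(1 + C A)⁻¹`. Moving these two outer factors past `C` and `A`
turns them into copies of `(1 + A C)⁻¹` on either side of `1 + A C`, and one of them cancels.
For `A = B`, `C = Bᵀ` the matrix `1 + B Bᵀ` is positive definite, hence invertible.
-/

namespace Matrix

section PushThrough

variable {m n α : Type*} [Fintype m] [Fintype n] [DecidableEq m] [DecidableEq n] [CommRing α]
  {A : Matrix m n α} {C : Matrix n m α}

theorem isUnit_one_add_mul_comm (h : IsUnit (1 + A * C)) : IsUnit (1 + C * A) := by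
  rwa [isUnit_iff_isUnit_det, ← det_one_add_mul_comm, ← isUnit_iff_isUnit_det]

theorem mul_inv_one_add_mul_comm (h : IsUnit (1 + A * C)) :
    C * (1 + A * C)⁻¹ = (1 + C * A)⁻¹ * C := by
  have hAC := (isUnit_iff_isUnit_det _).mp h
  have hCA := (isUnit_iff_isUnit_det _).mp (isUnit_one_add_mul_comm h)
  calc C * (1 + A * C)⁻¹ = (1 + C * A)⁻¹ * ((1 + C * A) * C) * (1 + A * C)⁻¹ := by
        rw [nonsing_inv_mul_cancel_left _ C hCA]
    _ = (1 + C * A)⁻¹ * C * (1 + A * C) * (1 + A * C)⁻¹ := by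
        simp only [Matrix.add_mul, Matrix.mul_add, Matrix.one_mul, Matrix.mul_one, Matrix.mul_assoc]
    _ = (1 + C * A)⁻¹ * C := mul_nonsing_inv_cancel_right _ _ hAC

theorem one_sub_mul_inv_one_add_mul_mul (h : IsUnit (1 + A * C)) :
    1 - C * (1 + A * C)⁻¹ * A = (1 + C * A)⁻¹ := by
  have hCA := (isUnit_iff_isUnit_det _).mp (isUnit_one_add_mul_comm h)
  calc 1 - C * (1 + A * C)⁻¹ * A = 1 - (1 + C * A)⁻¹ * ((1 + C * A) - 1) := by
        rw [mul_inv_one_add_mul_comm h, add_sub_cancel_left, Matrix.mul_assoc]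
    _ = (1 + C * A)⁻¹ := by
        rw [Matrix.mul_sub, nonsing_inv_mul _ hCA, Matrix.mul_one, sub_sub_cancel]

theorem one_sub_mul_inv_one_add_mul_mul_conj (h : IsUnit (1 + A * C)) :
    (1 - C * (1 + A * C)⁻¹ * A) * (C * (1 + A * C) * A) * (1 - C * (1 + A * C)⁻¹ * A) =
      C * (1 + A * C)⁻¹ * A := by
  have hAC := (isUnit_iff_isUnit_det _).mp h
  rw [one_sub_mul_inv_one_add_mul_mul h]
  calc (1 + C * A)⁻¹ * (C * (1 + A * C) * A) * (1 + C * A)⁻¹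
      = (1 + C * A)⁻¹ * C * (1 + A * C) * (A * (1 + C * A)⁻¹) := by
        simp only [Matrix.mul_assoc]
    _ = C * (1 + A * C)⁻¹ * (1 + A * C) * ((1 + A * C)⁻¹ * A) := by
        rw [← mul_inv_one_add_mul_comm h, mul_inv_one_add_mul_comm (isUnit_one_add_mul_comm h)]
    _ = C * (1 + A * C)⁻¹ * A := by
        rw [nonsing_inv_mul_cancel_right _ _ hAC, Matrix.mul_assoc]

end PushThrough

theorem isUnit_one_add_mul_conjTranspose {m n K : Type*} [Fintype m] [Fintype n] [DecidableEq m]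
    [Field K] [PartialOrder K] [StarRing K] [StarOrderedRing K] (B : Matrix m n K) :
    IsUnit (1 + B * Bᴴ) :=
  (PosDef.one.add_posSemidef (posSemidef_self_mul_conjTranspose B)).isUnit

end Matrix

theorem key_algebraic_identity {d n : ℕ} (B : Matrix (Fin d) (Fin n) ℝ) :
    (1 - B.transpose * (1 + B * B.transpose)⁻¹ * B) *
        (B.transpose * (1 + B * B.transpose) * B) *
        (1 - B.transpose * (1 + B * B.transpose)⁻¹ * B) =
      B.transpose * (1 + B * B.transpose)⁻¹ * B := by
  have h := Matrix.isUnit_one_add_mul_conjTranspose B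
  rw [Matrix.conjTranspose_eq_transpose_of_trivial] at h
  exact Matrix.one_sub_mul_inv_one_add_mul_mul_conj h
end
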